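/- arXiv:1901.09653 — 5 statements merged into one kernel-verified Lean document; each statement's English description precedes it below -/
import Mathlib

section
/- Let X be a real random variable with Gaussian law of mean m ∈ ℝ and variance v > 0. Then the undersupply penalty function g(y) = E[(X − y)² | X > y] = v·[(1 + a²) − a·φ(a)/(1 − Φ(a))] with a = (y − m)/√v is strictly decreasing in y on ℝ. -/
open MeasureTheory ProbabilityTheory Set
open scoped NNReal

/-!
Translating by `y`, the penalty at `y` is `E[Z² ; Z > 0] / P(Z > 0)` for `Z` Gaussian with
mean `m - y` and variance `v`, so it suffices that this quantity is strictly increasing in the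
mean. The Gaussian location family has a strictly monotone likelihood ratio: for `μ₁ < μ₂` the
ratio of `p = φ_{μ₂}` to `q = φ_{μ₁}` is strictly increasing. For such `p`, `q` and strictly
increasing `h`, the symmetrized integrand `(h x - h y) (p x q y - p y q x)` is positive off the
diagonal, and its double integral is `2 (∫ h p ∫ q - ∫ h q ∫ p)`.
-/

section LikelihoodRatio

variable {μ : Measure ℝ} [SFinite μ] {S : Set ℝ} {p q h : ℝ → ℝ}

theorem setIntegral_mul_lt_of_strictMonoOn_ratio (hS : MeasurableSet S)
    (hp : IntegrableOn p S μ) (hq : IntegrableOn q S μ)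
    (hhp : IntegrableOn (fun x ↦ h x * p x) S μ) (hhq : IntegrableOn (fun x ↦ h x * q x) S μ)
    (hh : StrictMonoOn h S) (hpq : ∀ x ∈ S, ∀ y ∈ S, x < y → p x * q y < p y * q x)
    {c : ℝ} (hlt : 0 < μ (S ∩ Iio c)) (hgt : 0 < μ (S ∩ Ioi c)) :
    (∫ x in S, h x * q x ∂μ) * (∫ x in S, p x ∂μ) <
      (∫ x in S, h x * p x ∂μ) * ∫ x in S, q x ∂μ := by
  set F : ℝ × ℝ → ℝ := fun z ↦ (h z.1 - h z.2) * (p z.1 * q z.2 - p z.2 * q z.1)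
  have hF_nonneg : ∀ x ∈ S, ∀ y ∈ S, 0 ≤ F (x, y) := by
    intro x hx y hy
    rcases lt_trichotomy x y with hxy | rfl | hxy
    · exact mul_nonneg_of_nonpos_of_nonpos (sub_nonpos.2 (hh hx hy hxy).le)
        (sub_nonpos.2 (hpq x hx y hy hxy).le)
    · simp [F]
    · exact mul_nonneg (sub_nonneg.2 (hh hy hx hxy).le)
        (sub_nonneg.2 (by linarith [hpq y hy x hx hxy]))
  have hF_pos : ∀ x ∈ S, ∀ y ∈ S, x < y → 0 < F (x, y) := fun x hx y hy hxy ↦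
    mul_pos_of_neg_of_neg (sub_neg.2 (hh hx hy hxy)) (sub_neg.2 (hpq x hx y hy hxy))
  have hprod {f g : ℝ → ℝ} (hf : IntegrableOn f S μ) (hg : IntegrableOn g S μ) :
      IntegrableOn (fun z : ℝ × ℝ ↦ f z.1 * g z.2) (S ×ˢ S) (μ.prod μ) := by
    rw [IntegrableOn, ← Measure.prod_restrict]
    exact hf.mul_prod hg
  have I₁ := hprod hhp hq
  have I₂ := hprod hhq hp
  have I₃ := hprod hp hhq
  have I₄ := hprod hq hhp
  have hF_eq : F = ((fun z ↦ (h z.1 * p z.1) * q z.2) - fun z ↦ (h z.1 * q z.1) * p z.2) -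
      ((fun z ↦ p z.1 * (h z.2 * q z.2)) - fun z ↦ q z.1 * (h z.2 * p z.2)) := by
    ext z; simp only [F, Pi.sub_apply]; ring
  have hF_integrable : IntegrableOn F (S ×ˢ S) (μ.prod μ) := by
    rw [hF_eq]
    exact (I₁.sub I₂).sub (I₃.sub I₄)
  have hF_int : ∫ z in S ×ˢ S, F z ∂μ.prod μ =
      2 * ((∫ x in S, h x * p x ∂μ) * (∫ x in S, q x ∂μ) -
        (∫ x in S, h x * q x ∂μ) * (∫ x in S, p x ∂μ)) := by
    rw [hF_eq, integral_sub' (I₁.sub I₂) (I₃.sub I₄), integral_sub' I₁ I₂,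
      integral_sub' I₃ I₄,
      setIntegral_prod_mul (fun x ↦ h x * p x) q, setIntegral_prod_mul (fun x ↦ h x * q x) p,
      setIntegral_prod_mul p (fun x ↦ h x * q x), setIntegral_prod_mul q (fun x ↦ h x * p x)]
    ring
  have hpos : 0 < ∫ z in S ×ˢ S, F z ∂μ.prod μ := by
    rw [setIntegral_pos_iff_support_of_nonneg_ae _ hF_integrable]
    · calc (0 : ENNReal) < μ (S ∩ Iio c) * μ (S ∩ Ioi c) := ENNReal.mul_pos hlt.ne' hgt.ne'
        _ = (μ.prod μ) ((S ∩ Iio c) ×ˢ (S ∩ Ioi c)) := (Measure.prod_prod _ _).symm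
        _ ≤ _ := measure_mono fun z ⟨⟨hx, hxc⟩, ⟨hy, hcy⟩⟩ ↦
          show _ ∧ _ from ⟨(hF_pos _ hx _ hy (lt_trans hxc hcy)).ne', hx, hy⟩
    · filter_upwards [ae_restrict_mem (hS.prod hS)] with z hz
      exact hF_nonneg _ hz.1 _ hz.2
  linarith

end LikelihoodRatio

section Gaussian

variable {v : ℝ≥0}

theorem gaussianPDFReal_mul_lt_mul_of_lt (hv : v ≠ 0) {μ₁ μ₂ x y : ℝ}
    (hμ : μ₁ < μ₂) (hxy : x < y) :
    gaussianPDFReal μ₂ v x * gaussianPDFReal μ₁ v y <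
      gaussianPDFReal μ₂ v y * gaussianPDFReal μ₁ v x := by
  simp only [gaussianPDFReal]
  rw [mul_mul_mul_comm, mul_mul_mul_comm _ (Real.exp _), ← Real.exp_add, ← Real.exp_add]
  refine mul_lt_mul_of_pos_left (Real.exp_lt_exp.2 ?_) (by positivity)
  have hv' : (0 : ℝ) < 2 * v := by positivity
  rw [← add_div, ← add_div, div_lt_div_iff_of_pos_right hv']
  nlinarith [mul_pos (sub_pos.2 hμ) (sub_pos.2 hxy)]

theorem setIntegral_gaussianReal_eq_setIntegral_mul_gaussianPDFReal (μ : ℝ) (hv : v ≠ 0)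
    (f : ℝ → ℝ) (s : Set ℝ) :
    ∫ x in s, f x ∂gaussianReal μ v = ∫ x in s, f x * gaussianPDFReal μ v x := by
  rw [gaussianReal_of_var_ne_zero _ hv, setIntegral_withDensity_eq_setIntegral_toReal_smul₀' s
    (measurable_gaussianPDF μ v).aemeasurable (ae_of_all _ fun _ ↦ gaussianPDF_lt_top)]
  simp only [toReal_gaussianPDF, smul_eq_mul, mul_comm]

theorem integrable_mul_gaussianPDFReal_iff (μ : ℝ) (hv : v ≠ 0) {f : ℝ → ℝ} :
    Integrable (fun x ↦ f x * gaussianPDFReal μ v x) ↔ Integrable f (gaussianReal μ v) := by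
  rw [gaussianReal_of_var_ne_zero _ hv, integrable_withDensity_iff (measurable_gaussianPDF μ v)
    (ae_of_all _ fun _ ↦ gaussianPDF_lt_top)]
  simp only [toReal_gaussianPDF]

end Gaussian

noncomputable def tailPenalty (ν : Measure ℝ) (y : ℝ) : ℝ :=
  (∫ x in Ioi y, (x - y) ^ 2 ∂ν) / ν.real (Ioi y)

theorem tailPenalty_map {Ω : Type*} [MeasurableSpace Ω] {P : Measure Ω} {X : Ω → ℝ}
    (hX : AEMeasurable X P) (y : ℝ) :
    tailPenalty (P.map X) y =
      (∫ ω in {ω | y < X ω}, (X ω - y) ^ 2 ∂P) / P.real {ω | y < X ω} := by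
  rw [tailPenalty, setIntegral_map measurableSet_Ioi (by fun_prop) hX, measureReal_def,
    measureReal_def, Measure.map_apply_of_aemeasurable hX measurableSet_Ioi]
  rfl

theorem tailPenalty_eq_tailPenalty_map_sub (ν : Measure ℝ) (y : ℝ) :
    tailPenalty ν y = tailPenalty (ν.map (· - y)) 0 := by
  rw [tailPenalty_map (by fun_prop)]
  simp only [tailPenalty, sub_pos, sub_zero]
  rfl

theorem strictMono_tailPenalty_gaussianReal_zero {v : ℝ≥0} (hv : v ≠ 0) :
    StrictMono fun μ ↦ tailPenalty (gaussianReal μ v) 0 := by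
  intro μ₁ μ₂ hμ
  have hmass (μ : ℝ) :
      (gaussianReal μ v).real (Ioi 0) = ∫ x in Ioi 0, gaussianPDFReal μ v x := by
    simpa using
      setIntegral_gaussianReal_eq_setIntegral_mul_gaussianPDFReal μ hv (fun _ ↦ 1) (Ioi 0)
  have hmass_pos (μ : ℝ) : 0 < (gaussianReal μ v).real (Ioi 0) :=
    ENNReal.toReal_pos (fun h ↦ by simpa using gaussianReal_absolutelyContinuous' μ hv h)
      (measure_ne_top _ _)
  have hsq (μ : ℝ) : IntegrableOn (fun x ↦ x ^ 2 * gaussianPDFReal μ v x) (Ioi 0) :=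
    ((integrable_mul_gaussianPDFReal_iff μ hv).2
      (memLp_id_gaussianReal 2).integrable_sq).integrableOn
  simp only [tailPenalty, sub_zero]
  rw [div_lt_div_iff₀ (hmass_pos μ₁) (hmass_pos μ₂), hmass, hmass,
    setIntegral_gaussianReal_eq_setIntegral_mul_gaussianPDFReal _ hv,
    setIntegral_gaussianReal_eq_setIntegral_mul_gaussianPDFReal _ hv]
  refine setIntegral_mul_lt_of_strictMonoOn_ratio (c := 1) measurableSet_Ioi
    (integrable_gaussianPDFReal μ₂ v).integrableOn
    (integrable_gaussianPDFReal μ₁ v).integrableOn (hsq μ₂) (hsq μ₁)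
    (fun x hx y _ hxy ↦ pow_lt_pow_left₀ hxy (le_of_lt hx) two_ne_zero)
    (fun x _ y _ hxy ↦ gaussianPDFReal_mul_lt_mul_of_lt hv hμ hxy) ?_ ?_
  · rw [Ioi_inter_Iio, Real.volume_Ioo]
    norm_num
  · rw [Ioi_inter_Ioi, Real.volume_Ioi]
    exact ENNReal.zero_lt_top

theorem strictAnti_tailPenalty_gaussianReal (m : ℝ) {v : ℝ≥0} (hv : v ≠ 0) :
    StrictAnti (tailPenalty (gaussianReal m v)) := by
  intro a b hab
  rw [tailPenalty_eq_tailPenalty_map_sub _ a, tailPenalty_eq_tailPenalty_map_sub _ b,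
    gaussianReal_map_sub_const, gaussianReal_map_sub_const]
  exact strictMono_tailPenalty_gaussianReal_zero hv (by linarith)

theorem gaussian_undersupply_penalty_strictAnti_general {Ω : Type*} [MeasureSpace Ω]
    (P : Measure Ω)
    (X : Ω → ℝ) (hX : Measurable X) (m : ℝ) (v : ℝ≥0) (hv : 0 < v)
    (hlaw : Measure.map X P = gaussianReal m v)
    (g : ℝ → ℝ)
    (hg : ∀ y, g y =
      (∫ ω in {ω | y < X ω}, (X ω - y) ^ 2 ∂P) / (P {ω | y < X ω}).toReal) :
    StrictAnti g := by
  have hg_eq : g = tailPenalty (P.map X) := funext fun y ↦ by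
    rw [hg, tailPenalty_map hX.aemeasurable, measureReal_def]
  rw [hg_eq, hlaw]
  exact strictAnti_tailPenalty_gaussianReal m hv.ne'

/-- For a Gaussian random variable `X` with mean `m` and variance `v > 0`, the
undersupply penalty `g(y) = E[(X − y)² | X > y] = E[(X − y)²·1_{X > y}]/P(X > y)`
is strictly decreasing in `y` on `ℝ`. -/
theorem gaussian_undersupply_penalty_strictAnti {Ω : Type*} [MeasureSpace Ω]
    (P : Measure Ω) [IsProbabilityMeasure P]
    (X : Ω → ℝ) (hX : Measurable X) (m : ℝ) (v : ℝ≥0) (hv : 0 < v)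
    (hlaw : Measure.map X P = gaussianReal m v)
    (g : ℝ → ℝ)
    (hg : ∀ y, g y =
      (∫ ω in {ω | y < X ω}, (X ω - y) ^ 2 ∂P) / (P {ω | y < X ω}).toReal) :
    StrictAnti g :=
  gaussian_undersupply_penalty_strictAnti_general P X hX m v hv hlaw g hg
end

section
/- Let X be a real random variable with Gaussian law of mean m ∈ ℝ and variance v > 0, and let g(y) = E[(X − y)² | X > y]. Then g(y) → 0 as y → +∞. -/
/-!
Translating by the threshold, `g y = E[Y² | Y > 0]` for `Y ~ N(μ, v)` with `μ = m - y → -∞`.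
Since the exponent of the Gaussian density `f` is concave, `f` lies below `f 0 · exp (μ x / v)`,
whence `E[Y²; Y > 0] ≤ 2 f 0 (v / |μ|)³`. Once `μ² ≥ v`, the density stays above `f 0 · e^{-3/2}`
on `(0, v / |μ|]`, whence `P(Y > 0) ≥ f 0 e^{-3/2} v / |μ|`. So `g y = O(v² / (y - m)²)`.
-/

open MeasureTheory ProbabilityTheory Set Filter Real Topology
open scoped NNReal

namespace Real

lemma integral_sq_mul_exp_neg_mul_Ioi {a : ℝ} (ha : 0 < a) :
    ∫ x in Ioi (0 : ℝ), x ^ 2 * rexp (-(a * x)) = 2 / a ^ 3 := by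
  have h := integral_rpow_mul_exp_neg_mul_Ioi (a := 3) (by norm_num) ha
  norm_num at h
  rw [h]
  ring

lemma integrableOn_sq_mul_exp_neg_mul_Ioi {a : ℝ} (ha : 0 < a) :
    IntegrableOn (fun x : ℝ ↦ x ^ 2 * rexp (-(a * x))) (Ioi 0) :=
  Integrable.of_integral_ne_zero <| by rw [integral_sq_mul_exp_neg_mul_Ioi ha]; positivity

end Real

namespace ProbabilityTheory

lemma gaussianPDFReal_le_mul_exp (μ : ℝ) (v : ℝ≥0) (x y : ℝ) :
    gaussianPDFReal μ v x ≤ gaussianPDFReal μ v y * rexp (-((y - μ) / v * (x - y))) := by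
  rcases eq_zero_or_pos v with rfl | hv
  · simp
  have hv' : (0 : ℝ) < v := hv
  rw [gaussianPDFReal, gaussianPDFReal, mul_assoc _ (rexp _), ← Real.exp_add]
  gcongr
  field_simp
  nlinarith [sq_nonneg (x - y)]

lemma gaussianPDFReal_mul_exp_neg_le (μ : ℝ) (v : ℝ≥0) {y z k : ℝ}
    (h : (z - μ) ^ 2 ≤ (y - μ) ^ 2 + 2 * v * k) :
    gaussianPDFReal μ v y * rexp (-k) ≤ gaussianPDFReal μ v z := by
  rcases eq_zero_or_pos v with rfl | hv
  · simp
  have hv' : (0 : ℝ) < v := hv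
  rw [gaussianPDFReal, gaussianPDFReal, mul_assoc, ← Real.exp_add]
  gcongr
  rw [div_add' _ _ _ (by positivity), div_le_div_iff_of_pos_right (by positivity)]
  linarith

lemma setIntegral_gaussianReal_eq_setIntegral_smul {E : Type*} [NormedAddCommGroup E]
    [NormedSpace ℝ E] (μ : ℝ) {v : ℝ≥0} (hv : v ≠ 0) (φ : ℝ → E) {s : Set ℝ}
    (hs : MeasurableSet s) :
    ∫ x in s, φ x ∂gaussianReal μ v = ∫ x in s, gaussianPDFReal μ v x • φ x := by
  rw [gaussianReal_of_var_ne_zero _ hv,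
    setIntegral_withDensity_eq_setIntegral_toReal_smul (measurable_gaussianPDF μ v)
      (ae_of_all _ fun _ ↦ ENNReal.ofReal_lt_top) _ hs]
  simp only [gaussianPDF, ENNReal.toReal_ofReal (gaussianPDFReal_nonneg μ v _)]

lemma setIntegral_Ioi_sq_mul_gaussianPDFReal_le {μ : ℝ} {v : ℝ≥0} (hv : 0 < v) (hμ : μ < 0) :
    ∫ x in Ioi 0, x ^ 2 * gaussianPDFReal μ v x ≤ gaussianPDFReal μ v 0 * (2 * (v / -μ) ^ 3) := by
  have ha : 0 < -μ / v := div_pos (neg_pos.2 hμ) (NNReal.coe_pos.2 hv)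
  have hbound : ∀ x ∈ Ioi (0 : ℝ), x ^ 2 * gaussianPDFReal μ v x ≤
      gaussianPDFReal μ v 0 * (x ^ 2 * rexp (-(-μ / v * x))) := by
    intro x _
    have htangent := gaussianPDFReal_le_mul_exp μ v x 0
    rw [zero_sub, sub_zero] at htangent
    rw [mul_left_comm]
    gcongr
  calc ∫ x in Ioi 0, x ^ 2 * gaussianPDFReal μ v x
      ≤ ∫ x in Ioi 0, gaussianPDFReal μ v 0 * (x ^ 2 * rexp (-(-μ / v * x))) := by
        refine integral_mono_of_nonneg (ae_of_all _ fun x ↦ ?_)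
          ((integrableOn_sq_mul_exp_neg_mul_Ioi ha).const_mul _)
          ((ae_restrict_iff' measurableSet_Ioi).2 (ae_of_all _ hbound))
        exact mul_nonneg (sq_nonneg x) (gaussianPDFReal_nonneg μ v x)
    _ = gaussianPDFReal μ v 0 * (2 * (v / -μ) ^ 3) := by
        rw [integral_const_mul, integral_sq_mul_exp_neg_mul_Ioi ha]
        field_simp

lemma mul_le_setIntegral_Ioi_gaussianPDFReal {μ : ℝ} {v : ℝ≥0} (hv : 0 < v) (hμ : μ ≤ -√v) :
    gaussianPDFReal μ v 0 * rexp (-(3 / 2)) * (v / -μ) ≤ ∫ x in Ioi 0, gaussianPDFReal μ v x := by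
  have hv' : (0 : ℝ) < v := hv
  have ht : 0 < -μ := by linarith [Real.sqrt_pos.2 hv']
  have hvt : (v : ℝ) ≤ μ ^ 2 := by nlinarith [Real.sq_sqrt hv'.le, Real.sqrt_nonneg v]
  set δ := (v : ℝ) / -μ
  have hδt : δ * -μ = v := div_mul_cancel₀ _ ht.ne'
  have hδpos : 0 < δ := div_pos hv' ht
  have hδsq : δ ^ 2 ≤ v := by
    refine le_of_mul_le_mul_right ?_ (by nlinarith : 0 < μ ^ 2)
    nlinarith
  have hpdf : ∀ x ∈ Ioc 0 δ, gaussianPDFReal μ v 0 * rexp (-(3 / 2)) ≤ gaussianPDFReal μ v x := by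
    rintro x ⟨hx0, hxδ⟩
    refine gaussianPDFReal_mul_exp_neg_le μ v ?_
    have hxδ' : (x - μ) ^ 2 ≤ (δ - μ) ^ 2 := by gcongr; linarith
    nlinarith
  calc gaussianPDFReal μ v 0 * rexp (-(3 / 2)) * δ
      = ∫ _ in Ioc 0 δ, gaussianPDFReal μ v 0 * rexp (-(3 / 2)) := by
        rw [setIntegral_const, Real.volume_real_Ioc_of_le hδpos.le, sub_zero, smul_eq_mul, mul_comm]
    _ ≤ ∫ x in Ioc 0 δ, gaussianPDFReal μ v x :=
        setIntegral_mono_on (integrableOn_const measure_Ioc_lt_top.ne)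
          (integrable_gaussianPDFReal μ v).integrableOn measurableSet_Ioc hpdf
    _ ≤ ∫ x in Ioi 0, gaussianPDFReal μ v x :=
        setIntegral_mono_set (integrable_gaussianPDFReal μ v).integrableOn
          (ae_of_all _ (gaussianPDFReal_nonneg μ v)) Ioc_subset_Ioi_self.eventuallyLE

noncomputable def condSecondMomentPos (μ : Measure ℝ) : ℝ :=
  (∫ x in Ioi 0, x ^ 2 ∂μ) / μ.real (Ioi 0)

lemma condSecondMomentPos_gaussianReal_le {μ : ℝ} {v : ℝ≥0} (hv : 0 < v) (hμ : μ ≤ -√v) :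
    condSecondMomentPos (gaussianReal μ v) ≤ 2 * rexp (3 / 2) * v ^ 2 / μ ^ 2 := by
  have hv' : (0 : ℝ) < v := hv
  have ht : 0 < -μ := by linarith [Real.sqrt_pos.2 hv']
  have hf0 := gaussianPDFReal_pos μ v 0 hv.ne'
  rw [condSecondMomentPos, measureReal_def, gaussianReal_apply_eq_integral _ hv.ne',
    ENNReal.toReal_ofReal (setIntegral_nonneg measurableSet_Ioi fun x _ ↦
      gaussianPDFReal_nonneg μ v x),
    setIntegral_gaussianReal_eq_setIntegral_smul _ hv.ne' _ measurableSet_Ioi]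
  simp only [smul_eq_mul, mul_comm (gaussianPDFReal μ v _)]
  calc (∫ x in Ioi 0, x ^ 2 * gaussianPDFReal μ v x) / ∫ x in Ioi 0, gaussianPDFReal μ v x
      ≤ gaussianPDFReal μ v 0 * (2 * (v / -μ) ^ 3) /
          (gaussianPDFReal μ v 0 * rexp (-(3 / 2)) * (v / -μ)) :=
        div_le_div₀ (by positivity) (setIntegral_Ioi_sq_mul_gaussianPDFReal_le hv (by linarith))
          (by positivity) (mul_le_setIntegral_Ioi_gaussianPDFReal hv hμ)
    _ = 2 * rexp (3 / 2) * v ^ 2 / μ ^ 2 := by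
        rw [Real.exp_neg]
        field_simp

lemma tendsto_condSecondMomentPos_gaussianReal_atBot {v : ℝ≥0} (hv : 0 < v) :
    Tendsto (fun μ ↦ condSecondMomentPos (gaussianReal μ v)) atBot (𝓝 0) := by
  have hbound : Tendsto (fun μ : ℝ ↦ 2 * rexp (3 / 2) * v ^ 2 / μ ^ 2) atBot (𝓝 0) :=
    tendsto_const_nhds.div_atTop <|
      ((tendsto_pow_atTop two_ne_zero).comp tendsto_neg_atBot_atTop).congr fun μ ↦ neg_sq μ
  refine tendsto_of_tendsto_of_tendsto_of_le_of_le' tendsto_const_nhds hbound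
    (Eventually.of_forall fun μ ↦ ?_) ?_
  · exact div_nonneg (setIntegral_nonneg measurableSet_Ioi fun x _ ↦ sq_nonneg x)
      measureReal_nonneg
  · filter_upwards [eventually_le_atBot (-√v)] with μ hμ
    exact condSecondMomentPos_gaussianReal_le hv hμ

lemma condSecondMomentPos_map_sub {Ω : Type*} [MeasurableSpace Ω] {P : Measure Ω} {X : Ω → ℝ}
    (hX : AEMeasurable X P) (y : ℝ) :
    (∫ ω in {ω | y < X ω}, (X ω - y) ^ 2 ∂P) / (P {ω | y < X ω}).toReal =
      condSecondMomentPos (P.map fun ω ↦ X ω - y) := by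
  have hY : AEMeasurable (fun ω ↦ X ω - y) P := hX.sub_const y
  have hset : {ω | y < X ω} = (fun ω ↦ X ω - y) ⁻¹' Ioi 0 := by ext; simp [sub_pos]
  rw [condSecondMomentPos, measureReal_def, Measure.map_apply_of_aemeasurable hY measurableSet_Ioi,
    setIntegral_map measurableSet_Ioi (by fun_prop) hY, hset]

end ProbabilityTheory

theorem gaussian_undersupply_penalty_tendsto_zero_general {Ω : Type*} [MeasureSpace Ω]
    (P : Measure Ω)
    (X : Ω → ℝ) (hX : Measurable X) (m : ℝ) (v : ℝ≥0) (hv : 0 < v)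
    (hlaw : Measure.map X P = gaussianReal m v)
    (g : ℝ → ℝ)
    (hg : ∀ y, g y =
      (∫ ω in {ω | y < X ω}, (X ω - y) ^ 2 ∂P) / (P {ω | y < X ω}).toReal) :
    Tendsto g atTop (nhds 0) := by
  have hg' : g = fun y ↦ condSecondMomentPos (gaussianReal (m - y) v) := funext fun y ↦ by
    rw [hg, condSecondMomentPos_map_sub hX.aemeasurable,
      (gaussianReal_sub_const ⟨hX.aemeasurable, hlaw⟩ y).map_eq]
  rw [hg']
  exact (tendsto_condSecondMomentPos_gaussianReal_atBot hv).comp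
    (tendsto_atBot_add_const_left _ m tendsto_neg_atTop_atBot)

/-- For a Gaussian random variable `X` with mean `m` and variance `v > 0`, the
undersupply penalty `g(y) = E[(X − y)² | X > y]` tends to `0` as `y → +∞`. -/
theorem gaussian_undersupply_penalty_tendsto_zero {Ω : Type*} [MeasureSpace Ω]
    (P : Measure Ω) [IsProbabilityMeasure P]
    (X : Ω → ℝ) (hX : Measurable X) (m : ℝ) (v : ℝ≥0) (hv : 0 < v)
    (hlaw : Measure.map X P = gaussianReal m v)
    (g : ℝ → ℝ)
    (hg : ∀ y, g y =
      (∫ ω in {ω | y < X ω}, (X ω - y) ^ 2 ∂P) / (P {ω | y < X ω}).toReal) :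
    Tendsto g atTop (nhds 0) :=
  gaussian_undersupply_penalty_tendsto_zero_general P X hX m v hv hlaw g hg
end

section
/- Let X be a real random variable with Gaussian law of mean m ∈ ℝ and variance v > 0, let α ≥ 0, and define the penalized objective f_α(y) = E[(X − y)²] + α·E[(X − y)² | X > y] = (m − y)² + v + α·g(y) with g(y) = E[(X − y)² | X > y]. Then f_α is continuous on ℝ and attains a global minimum at some y* ∈ ℝ. -/
open MeasureTheory ProbabilityTheory Set
open scoped NNReal

private lemma integrable_sq_gaussian (m : ℝ) (v : ℝ≥0) (hv : 0 < v) :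
    Integrable (fun x : ℝ => x ^ 2) (gaussianReal m v) := by
  rw [gaussianReal_of_var_ne_zero m hv.ne',
    integrable_withDensity_iff (measurable_gaussianPDF m v)
      (ae_of_all _ fun x => ENNReal.ofReal_lt_top)]
  have hb : (0:ℝ) < (2 * (v:ℝ))⁻¹ := by positivity
  have h2 : Integrable (fun t : ℝ => t ^ 2 * Real.exp (-(2 * (v:ℝ))⁻¹ * t ^ 2)) := by
    have := integrable_rpow_mul_exp_neg_mul_sq hb (s := 2) (by norm_num)
    have h : ∀ t : ℝ, t ^ (2:ℝ) = t ^ 2 := fun t => by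
      rw [show (2:ℝ) = ((2:ℕ):ℝ) by norm_num, Real.rpow_natCast]
    simpa only [h] using this
  have h1 : Integrable (fun t : ℝ => t * Real.exp (-(2 * (v:ℝ))⁻¹ * t ^ 2)) :=
    integrable_mul_exp_neg_mul_sq hb
  have h0 : Integrable (fun t : ℝ => Real.exp (-(2 * (v:ℝ))⁻¹ * t ^ 2)) :=
    integrable_exp_neg_mul_sq hb
  have hG : Integrable (fun t : ℝ =>
      (Real.sqrt (2 * Real.pi * v))⁻¹ *
        ((t + m) ^ 2 * Real.exp (-(2 * (v:ℝ))⁻¹ * t ^ 2))) := by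
    have := ((h2.add (h1.const_mul (2 * m))).add (h0.const_mul (m ^ 2))).const_mul
      (Real.sqrt (2 * Real.pi * v))⁻¹
    refine this.congr (ae_of_all _ fun t => ?_)
    simp only [Pi.add_apply]
    ring
  have := hG.comp_sub_right m
  refine this.congr (ae_of_all _ fun x => ?_)
  have hpdf : (gaussianPDF m v x).toReal = gaussianPDFReal m v x := by
    rw [gaussianPDF_def]
    exact ENNReal.toReal_ofReal (gaussianPDFReal_nonneg m v x)
  dsimp only
  rw [hpdf, gaussianPDFReal, sub_add_cancel,
    show -(2 * (v:ℝ))⁻¹ * (x - m) ^ 2 = -(x - m) ^ 2 / (2 * (v:ℝ)) by ring]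
  ring

/-- For a Gaussian random variable `X` with mean `m` and variance `v > 0` and
penalty intensity `α ≥ 0`, the penalized objective
`f_α(y) = E[(X − y)²] + α·E[(X − y)² | X > y] = (m − y)² + v + α·g(y)`
is continuous on `ℝ` and attains a global minimum at some `y* ∈ ℝ`. -/
theorem penalized_objective_continuous_and_attains_min {Ω : Type*} [MeasureSpace Ω]
    (P : Measure Ω) [IsProbabilityMeasure P]
    (X : Ω → ℝ) (hX : Measurable X) (m : ℝ) (v : ℝ≥0) (hv : 0 < v)
    (hlaw : Measure.map X P = gaussianReal m v)
    (α : ℝ) (hα : 0 ≤ α)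
    (g : ℝ → ℝ)
    (hg : ∀ y, g y =
      (∫ ω in {ω | y < X ω}, (X ω - y) ^ 2 ∂P) / (P {ω | y < X ω}).toReal)
    (f : ℝ → ℝ)
    (hf : ∀ y, f y = (m - y) ^ 2 + v + α * g y) :
    Continuous f ∧ ∃ ystar : ℝ, ∀ y : ℝ, f ystar ≤ f y := by
  set μ : Measure ℝ := gaussianReal m v with hμ
  have hμprob : IsProbabilityMeasure μ := by rw [hμ]; infer_instance
  set N : ℝ → ℝ := fun y => ∫ x, (max (x - y) 0) ^ 2 ∂μ with hN
  set D : ℝ → ℝ := fun y => (μ (Ioi y)).toReal with hD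
  -- the set {ω | y < X ω} is the preimage of Ioi y
  have hpre : ∀ y : ℝ, {ω | y < X ω} = X ⁻¹' (Ioi y) := fun y => rfl
  -- rewrite g in terms of N and D
  have hgy : ∀ y, g y = N y / D y := by
    intro y
    rw [hg y]
    have hPmeas : P {ω | y < X ω} = μ (Ioi y) := by
      rw [hpre, ← Measure.map_apply hX measurableSet_Ioi, hlaw]
    have hint : (∫ ω in {ω | y < X ω}, (X ω - y) ^ 2 ∂P) = ∫ x in Ioi y, (x - y) ^ 2 ∂μ := by
      rw [hpre, ← hlaw]
      exact (setIntegral_map measurableSet_Ioi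
        ((continuous_id.sub continuous_const).pow 2).aestronglyMeasurable
        hX.aemeasurable).symm
    rw [hPmeas, hint]
    congr 1
    rw [← integral_indicator measurableSet_Ioi]
    refine integral_congr_ae (ae_of_all _ fun x => ?_)
    dsimp only
    by_cases hx : x ∈ Ioi y
    · rw [indicator_of_mem hx]
      rw [max_eq_left (by simp only [mem_Ioi] at hx; linarith)]
    · rw [indicator_of_notMem hx]
      rw [max_eq_right (by simp only [mem_Ioi, not_lt] at hx; linarith), zero_pow two_ne_zero]
  -- N is continuous
  have hNcont : Continuous N := by
    rw [continuous_iff_continuousAt]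
    intro y₀
    set c : ℝ := |y₀| + 1 with hc
    apply continuousAt_of_dominated (bound := fun a => 2 * a ^ 2 + 2 * c ^ 2)
    · exact Filter.Eventually.of_forall fun y =>
        (((continuous_id.sub continuous_const).max continuous_const).pow 2).aestronglyMeasurable
    · have hball : ∀ᶠ y in nhds y₀, |y - y₀| < 1 := by
        have : Metric.ball y₀ 1 ∈ nhds y₀ := Metric.ball_mem_nhds y₀ one_pos
        filter_upwards [this] with y hy
        simpa [Real.dist_eq] using hy
      filter_upwards [hball] with y hy
      refine ae_of_all _ fun a => ?_
      have hy' : |y| ≤ c := by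
        have := abs_sub_abs_le_abs_sub y y₀
        rw [hc]; linarith
      have h1 : max (a - y) 0 ≤ |a| + c := by
        refine max_le (le_trans (le_trans (le_abs_self _) (abs_sub _ _)) ?_) (by positivity)
        exact add_le_add (le_refl _) hy'
      have h2 : (max (a - y) 0) ^ 2 ≤ (|a| + c) ^ 2 :=
        pow_le_pow_left₀ (le_max_right _ _) h1 2
      have h3 : (|a| + c) ^ 2 ≤ 2 * a ^ 2 + 2 * c ^ 2 := by
        nlinarith [sq_nonneg (|a| - c), sq_abs a]
      rw [Real.norm_eq_abs, abs_of_nonneg (by positivity)]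
      linarith
    · exact ((integrable_sq_gaussian m v hv).const_mul 2).add (integrable_const _)
    · refine ae_of_all _ fun a => ?_
      exact (((continuous_const.sub continuous_id).max continuous_const).pow 2).continuousAt
  -- D is continuous
  have hDeq : D = fun y => ∫ a, (Ioi y).indicator (fun _ => (1:ℝ)) a ∂μ := by
    funext y
    rw [hD]
    exact (integral_indicator_one measurableSet_Ioi).symm
  have hDcont : Continuous D := by
    rw [hDeq, continuous_iff_continuousAt]
    intro y₀
    apply continuousAt_of_dominated (bound := fun _ => (1:ℝ))
    · exact Filter.Eventually.of_forall fun y =>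
        (aestronglyMeasurable_indicator_iff measurableSet_Ioi).mpr aestronglyMeasurable_const
    · refine Filter.Eventually.of_forall fun y => ae_of_all _ fun a => ?_
      rw [Real.norm_eq_abs]
      by_cases h : a ∈ Ioi y
      · rw [indicator_of_mem h]; norm_num
      · rw [indicator_of_notMem h]; norm_num
    · exact integrable_const _
    · have hae : ∀ᵐ a ∂μ, a ≠ y₀ := by
        have h0 : μ {y₀} = 0 :=
          gaussianReal_absolutelyContinuous m hv.ne' Real.volume_singleton
        rw [ae_iff]
        simpa using h0
      filter_upwards [hae] with a ha
      rcases lt_or_gt_of_ne ha with hlt | hgt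
      · -- a < y₀ : eventually a < y, indicator is 0
        have hev : ∀ᶠ y in nhds y₀, (Ioi y).indicator (fun _ => (1:ℝ)) a = 0 := by
          have : Ioi a ∈ nhds y₀ := Ioi_mem_nhds hlt
          filter_upwards [this] with y hy
          exact indicator_of_notMem (by simp only [mem_Ioi, not_lt]; linarith [mem_Ioi.mp hy]) _
        exact (continuousAt_congr hev).mpr continuousAt_const
      · -- y₀ < a : eventually y < a, indicator is 1
        have hev : ∀ᶠ y in nhds y₀, (Ioi y).indicator (fun _ => (1:ℝ)) a = 1 := by
          have : Iio a ∈ nhds y₀ := Iio_mem_nhds hgt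
          filter_upwards [this] with y hy
          exact indicator_of_mem (mem_Ioi.mpr (mem_Iio.mp hy)) _
        exact (continuousAt_congr hev).mpr continuousAt_const
  -- D is positive
  have hDpos : ∀ y, 0 < D y := by
    intro y
    have h0 : μ (Ioi y) ≠ 0 := by
      rw [hμ, gaussianReal_of_var_ne_zero m hv.ne', withDensity_apply _ measurableSet_Ioi]
      intro h
      rw [lintegral_eq_zero_iff (measurable_gaussianPDF m v)] at h
      have hfalse : ∀ᵐ a ∂(volume.restrict (Ioi y)), False := by
        filter_upwards [h] with a ha
        exact (gaussianPDF_pos m hv.ne' a).ne' ha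
      have hbot := Filter.eventually_false_iff_eq_bot.mp hfalse
      rw [ae_eq_bot, Measure.restrict_eq_zero, Real.volume_Ioi] at hbot
      exact ENNReal.top_ne_zero hbot
    exact ENNReal.toReal_pos h0 (measure_ne_top μ _)
  -- g is continuous, so f is continuous
  have hgfun : g = fun y => N y / D y := funext hgy
  have hgcont : Continuous g := by
    rw [hgfun]
    exact hNcont.div hDcont fun y => (hDpos y).ne'
  have hffun : f = fun y => (m - y) ^ 2 + v + α * g y := funext hf
  have hfc : Continuous f := by
    rw [hffun]
    exact (((continuous_const.sub continuous_id).pow 2).add continuous_const).add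
      (continuous_const.mul hgcont)
  refine ⟨hfc, ?_⟩
  -- g is nonnegative
  have hgnn : ∀ y, 0 ≤ g y := by
    intro y
    rw [hgy y]
    refine div_nonneg ?_ (hDpos y).le
    exact integral_nonneg fun x => by positivity
  -- lower bound f y ≥ (m - y)^2
  have hlb : ∀ y, (m - y) ^ 2 ≤ f y := by
    intro y
    rw [hf y]
    have : 0 ≤ α * g y := mul_nonneg hα (hgnn y)
    have hv' : (0:ℝ) ≤ v := v.coe_nonneg
    linarith
  -- coercivity
  have htend : Filter.Tendsto (fun y : ℝ => (m - y) ^ 2) (Filter.cocompact ℝ) Filter.atTop := by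
    have t1 : Filter.Tendsto (fun y : ℝ => y - m) (Filter.cocompact ℝ) (Filter.cocompact ℝ) :=
      (Homeomorph.subRight m).map_cocompact.le
    have t2 : Filter.Tendsto (fun y : ℝ => ‖y - m‖) (Filter.cocompact ℝ) Filter.atTop :=
      tendsto_norm_cocompact_atTop.comp t1
    have t3 : Filter.Tendsto (fun y : ℝ => ‖y - m‖ ^ 2) (Filter.cocompact ℝ) Filter.atTop :=
      (Filter.tendsto_pow_atTop two_ne_zero).comp t2
    refine t3.congr fun y => ?_
    rw [Real.norm_eq_abs, sq_abs, ← neg_sub, neg_sq]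
  have hev : ∀ᶠ y in Filter.cocompact ℝ, f m ≤ f y := by
    filter_upwards [htend.eventually_ge_atTop (f m)] with y hy
    exact le_trans hy (hlb y)
  exact hfc.exists_forall_le' m hev
end

section
/- Let X be a real random variable with Gaussian law of mean m ∈ ℝ and variance v > 0, let α > 0, and define the penalized objective f_α(y) = (m − y)² + v + α·g(y) with g(y) = E[(X − y)² | X > y]. Then every global minimizer y* of f_α satisfies y* > m; that is, under a strictly positive undersupply penalty the optimal output lies strictly above the mean demand. -/
/-!
Stein's identity for `X ~ N(m, v)`, `E[(X - m) (X - t)⁺] = v P(X > t)`, turns the conditional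
second moment into `g t = v + (m - t) e t`, where `e t = E[X - t | X > t] ≥ 0` is the mean excess.
Hence `f t = v + α v + (m - t)² + α (m - t) e t ≥ v + α v` for `t ≤ m`, while at `t = m + ε` the
penalty `-α ε e (m + ε) ≤ -α ε P(X > m + 2)` beats `ε²` once `ε` is small.
-/

open MeasureTheory ProbabilityTheory Set
open scoped NNReal

/-- `E[X - t | X > t]` for `X` with law `μ` (junk value `0` when `μ (Ioi t) = 0`). -/
noncomputable def meanExcess (μ : Measure ℝ) (t : ℝ) : ℝ :=
  (∫ x in Ioi t, (x - t) ∂μ) / μ.real (Ioi t)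

section MeanExcess

variable {μ : Measure ℝ}

lemma meanExcess_nonneg (t : ℝ) : 0 ≤ meanExcess μ t :=
  div_nonneg (setIntegral_nonneg measurableSet_Ioi fun _ hx ↦ sub_nonneg.2 hx.le)
    measureReal_nonneg

lemma measureReal_Ioi_add_one_le_meanExcess [IsProbabilityMeasure μ] {t : ℝ}
    (h : IntegrableOn (fun x ↦ x - t) (Ioi t) μ) :
    μ.real (Ioi (t + 1)) ≤ meanExcess μ t := by
  have hsub : Ioi (t + 1) ⊆ Ioi t := Ioi_subset_Ioi (by linarith)
  have hexcess : μ.real (Ioi (t + 1)) ≤ ∫ x in Ioi t, (x - t) ∂μ :=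
    calc μ.real (Ioi (t + 1)) = ∫ _ in Ioi (t + 1), (1 : ℝ) ∂μ := by simp
      _ ≤ ∫ x in Ioi (t + 1), (x - t) ∂μ :=
        setIntegral_mono_on (integrableOn_const (measure_ne_top _ _)) (h.mono_set hsub)
          measurableSet_Ioi fun x hx ↦ by linarith [mem_Ioi.1 hx]
      _ ≤ ∫ x in Ioi t, (x - t) ∂μ :=
        setIntegral_mono_set h
          (ae_restrict_of_forall_mem measurableSet_Ioi fun x hx ↦ sub_nonneg.2 hx.le)
          hsub.eventuallyLE
  rcases (measureReal_nonneg (μ := μ) (s := Ioi t)).eq_or_lt with hzero | hpos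
  · calc μ.real (Ioi (t + 1)) ≤ μ.real (Ioi t) := measureReal_mono hsub
      _ = 0 := hzero.symm
      _ ≤ meanExcess μ t := meanExcess_nonneg t
  · exact hexcess.trans (le_div_self (measureReal_nonneg.trans hexcess) hpos measureReal_le_one)

end MeanExcess

section Gaussian

variable {m : ℝ} {v : ℝ≥0}

lemma integrable_gaussianReal_iff (hv : v ≠ 0) {h : ℝ → ℝ} :
    Integrable h (gaussianReal m v) ↔ Integrable (fun x ↦ gaussianPDFReal m v x * h x) := by
  rw [gaussianReal_of_var_ne_zero m hv, integrable_withDensity_iff_integrable_smul'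
    (measurable_gaussianPDF m v) (ae_of_all _ fun _ ↦ gaussianPDF_lt_top)]
  simp only [toReal_gaussianPDF, smul_eq_mul]

lemma setIntegral_gaussianReal_eq_setIntegral_mul (hv : v ≠ 0) (h : ℝ → ℝ) {s : Set ℝ}
    (hs : MeasurableSet s) :
    ∫ x in s, h x ∂gaussianReal m v = ∫ x in s, gaussianPDFReal m v x * h x := by
  rw [gaussianReal_of_var_ne_zero m hv]
  refine (setIntegral_withDensity_eq_setIntegral_smul
    (measurable_gaussianPDFReal m v).real_toNNReal _ hs).trans
    (setIntegral_congr_fun hs fun x _ ↦ ?_)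
  rw [NNReal.smul_def, smul_eq_mul, Real.coe_toNNReal _ (gaussianPDFReal_nonneg m v x)]

lemma hasDerivAt_gaussianPDFReal (m : ℝ) (v : ℝ≥0) (x : ℝ) :
    HasDerivAt (gaussianPDFReal m v) (-((x - m) / v) * gaussianPDFReal m v x) x := by
  have hexp : HasDerivAt (fun x ↦ -(x - m) ^ 2 / (2 * v)) (-((x - m) / v)) x := by
    have hsq : HasDerivAt (fun x ↦ (x - m) ^ 2) (2 * (x - m)) x := by
      simpa using ((hasDerivAt_id x).sub_const m).fun_pow 2
    exact (hsq.neg.div_const (2 * (v : ℝ))).congr_deriv (by ring)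
  simp only [gaussianPDFReal_def]
  exact (hexp.exp.const_mul _).congr_deriv (by ring)

lemma integrable_sub_mul_sub_gaussianReal (a b : ℝ) :
    Integrable (fun x ↦ (x - a) * (x - b)) (gaussianReal m v) := by
  have hL2 (c : ℝ) : MemLp (fun x ↦ x - c) 2 (gaussianReal m v) :=
    (memLp_id_gaussianReal 2).sub (memLp_const c)
  exact (hL2 a).integrable_mul (hL2 b)

lemma integrable_sub_gaussianReal (a : ℝ) : Integrable (fun x ↦ x - a) (gaussianReal m v) :=
  ((memLp_id_gaussianReal 1).sub (memLp_const a)).integrable le_rfl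

lemma measureReal_Ioi_gaussianReal_pos (hv : v ≠ 0) (t : ℝ) :
    0 < (gaussianReal m v).real (Ioi t) := by
  refine ENNReal.toReal_pos (fun h ↦ ?_) (measure_ne_top _ _)
  simpa using gaussianReal_absolutelyContinuous' m hv h

lemma measureReal_gaussianReal (hv : v ≠ 0) (s : Set ℝ) :
    (gaussianReal m v).real s = ∫ x in s, gaussianPDFReal m v x := by
  rw [measureReal_def, gaussianReal_apply_eq_integral m hv, ENNReal.toReal_ofReal
    (setIntegral_nonneg_of_ae (ae_of_all _ (gaussianPDFReal_nonneg m v)))]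

/-- Stein's identity `E[(X - m) h X] = v E[h' X]` for `h x = (x - t)⁺`: the integrand minus
`v φ` is the derivative of `-v (x - t) φ x`, which vanishes at `t` and at `∞`. -/
lemma setIntegral_Ioi_sub_mul_sub_mean_gaussianReal (hv : v ≠ 0) (t : ℝ) :
    ∫ x in Ioi t, (x - t) * (x - m) ∂gaussianReal m v = v * (gaussianReal m v).real (Ioi t) := by
  set φ := gaussianPDFReal m v
  have hφ : Integrable φ := integrable_gaussianPDFReal m v
  have hφ2 : Integrable (fun x ↦ φ x * ((x - t) * (x - m))) :=
    (integrable_gaussianReal_iff hv).1 (integrable_sub_mul_sub_gaussianReal t m)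
  have hφ1 : Integrable (fun x ↦ φ x * (x - t)) :=
    (integrable_gaussianReal_iff hv).1 (integrable_sub_gaussianReal t)
  have hderiv (x : ℝ) : HasDerivAt (fun x ↦ -(v : ℝ) * (φ x * (x - t)))
      (φ x * ((x - t) * (x - m)) - v * φ x) x := by
    refine (((hasDerivAt_gaussianPDFReal m v x).mul ((hasDerivAt_id x).sub_const t)).const_mul
      (-(v : ℝ))).congr_deriv ?_
    simp only [id_eq, φ]
    field_simp
    ring
  have hderiv_int : Integrable (fun x ↦ φ x * ((x - t) * (x - m)) - v * φ x) :=
    hφ2.sub (hφ.const_mul v)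
  have hlim := tendsto_zero_of_hasDerivAt_of_integrableOn_Ioi (a := t) (fun x _ ↦ hderiv x)
    hderiv_int.integrableOn (hφ1.const_mul _).integrableOn
  have hFTC := integral_Ioi_of_hasDerivAt_of_tendsto' (a := t) (fun x _ ↦ hderiv x)
    hderiv_int.integrableOn hlim
  rw [integral_sub hφ2.integrableOn (hφ.const_mul _).integrableOn, integral_const_mul] at hFTC
  rw [setIntegral_gaussianReal_eq_setIntegral_mul hv _ measurableSet_Ioi,
    measureReal_gaussianReal hv]
  simpa [sub_eq_zero] using hFTC

lemma setIntegral_Ioi_sub_sq_gaussianReal (hv : v ≠ 0) (t : ℝ) :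
    ∫ x in Ioi t, (x - t) ^ 2 ∂gaussianReal m v =
      v * (gaussianReal m v).real (Ioi t) + (m - t) * ∫ x in Ioi t, (x - t) ∂gaussianReal m v := by
  have hsplit : (fun x ↦ (x - t) ^ 2) = fun x ↦ (x - t) * (x - m) + (m - t) * (x - t) := by
    ext x; ring
  rw [hsplit, integral_add (integrable_sub_mul_sub_gaussianReal t m).integrableOn
    ((integrable_sub_gaussianReal t).const_mul _).integrableOn, integral_const_mul,
    setIntegral_Ioi_sub_mul_sub_mean_gaussianReal hv]

lemma setIntegral_Ioi_sub_sq_div_measureReal_gaussianReal (hv : v ≠ 0) (t : ℝ) :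
    (∫ x in Ioi t, (x - t) ^ 2 ∂gaussianReal m v) / (gaussianReal m v).real (Ioi t) =
      v + (m - t) * meanExcess (gaussianReal m v) t := by
  have hpos := measureReal_Ioi_gaussianReal_pos (m := m) hv t
  rw [setIntegral_Ioi_sub_sq_gaussianReal hv, meanExcess]
  field_simp

end Gaussian

lemma lt_of_forall_le_of_eq_sq_add_mul {f r : ℝ → ℝ} {C m α c : ℝ} (hα : 0 < α) (hc : 0 < c)
    (hr : ∀ t, 0 ≤ r t) (hrc : ∀ t ≤ m + 1, c ≤ r t)
    (hf : ∀ t, f t = C + (m - t) ^ 2 + α * ((m - t) * r t)) {y : ℝ} (hy : ∀ t, f y ≤ f t) :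
    m < y := by
  by_contra! hym
  have hfy : C ≤ f y := by
    rw [hf]
    nlinarith [sq_nonneg (m - y), mul_nonneg (sub_nonneg.2 hym) (hr y)]
  set ε := min 1 (α * c / 2)
  have hε : 0 < ε := lt_min one_pos (by positivity)
  have hεc : ε < α * c := (min_le_right _ _).trans_lt (by linarith [mul_pos hα hc])
  have hfε : f (m + ε) < C := by
    have hcr : c ≤ r (m + ε) := hrc _ (by linarith [min_le_left 1 (α * c / 2)])
    rw [hf]
    nlinarith [mul_le_mul_of_nonneg_left hcr (mul_pos hα hε).le]
  linarith [hy (m + ε)]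


theorem penalized_objective_minimizer_above_mean_general {Ω : Type*} [MeasureSpace Ω]
    (P : Measure Ω)
    (X : Ω → ℝ) (hX : Measurable X) (m : ℝ) (v : ℝ≥0) (hv : 0 < v)
    (hlaw : Measure.map X P = gaussianReal m v)
    (α : ℝ) (hα : 0 < α)
    (g : ℝ → ℝ)
    (hg : ∀ y, g y =
      (∫ ω in {ω | y < X ω}, (X ω - y) ^ 2 ∂P) / (P {ω | y < X ω}).toReal)
    (f : ℝ → ℝ)
    (hf : ∀ y, f y = (m - y) ^ 2 + v + α * g y) :
    ∀ ystar : ℝ, (∀ y : ℝ, f ystar ≤ f y) → m < ystar := by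
  have hprob (y : ℝ) : (P {ω | y < X ω}).toReal = (gaussianReal m v).real (Ioi y) := by
    rw [measureReal_def, ← hlaw, Measure.map_apply hX measurableSet_Ioi]
    rfl
  have hmoment (y : ℝ) : ∫ ω in {ω | y < X ω}, (X ω - y) ^ 2 ∂P =
      ∫ x in Ioi y, (x - y) ^ 2 ∂gaussianReal m v := by
    rw [← hlaw, setIntegral_map measurableSet_Ioi (by fun_prop) hX.aemeasurable]
    rfl
  refine fun ystar hmin ↦ lt_of_forall_le_of_eq_sq_add_mul (C := v + α * v)
    (r := meanExcess (gaussianReal m v)) hα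
    (measureReal_Ioi_gaussianReal_pos (m := m) hv.ne' (m + 2)) meanExcess_nonneg (fun t ht ↦ ?_)
    (fun t ↦ ?_) hmin
  · exact (measureReal_mono (Ioi_subset_Ioi (by linarith))).trans
      (measureReal_Ioi_add_one_le_meanExcess (integrable_sub_gaussianReal t).integrableOn)
  · rw [hf, hg, hmoment, hprob, setIntegral_Ioi_sub_sq_div_measureReal_gaussianReal hv.ne']
    ring

/-- For a Gaussian random variable `X` with mean `m` and variance `v > 0` and a
strictly positive penalty intensity `α > 0`, every global minimizer `y*` of the
penalized objective `f_α(y) = (m − y)² + v + α·g(y)` with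
`g(y) = E[(X − y)² | X > y]` satisfies `y* > m`. -/
theorem penalized_objective_minimizer_above_mean {Ω : Type*} [MeasureSpace Ω]
    (P : Measure Ω) [IsProbabilityMeasure P]
    (X : Ω → ℝ) (hX : Measurable X) (m : ℝ) (v : ℝ≥0) (hv : 0 < v)
    (hlaw : Measure.map X P = gaussianReal m v)
    (α : ℝ) (hα : 0 < α)
    (g : ℝ → ℝ)
    (hg : ∀ y, g y =
      (∫ ω in {ω | y < X ω}, (X ω - y) ^ 2 ∂P) / (P {ω | y < X ω}).toReal)
    (f : ℝ → ℝ)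
    (hf : ∀ y, f y = (m - y) ^ 2 + v + α * g y) :
    ∀ ystar : ℝ, (∀ y : ℝ, f ystar ≤ f y) → m < ystar :=
  penalized_objective_minimizer_above_mean_general P X hX m v hv hlaw α hα g hg f hf
end

section
/- Let X be a real random variable with Gaussian law of mean m ∈ ℝ and variance v > 0, and for α ≥ 0 define f_α(y) = (m − y)² + v + α·g(y) with g(y) = E[(X − y)² | X > y]. If 0 ≤ α₁ < α₂ and y₁, y₂ are global minimizers of f_{α₁} and f_{α₂} respectively, then y₁ ≤ y₂; that is, a higher undersupply penalty parameter leads to a (weakly) higher optimal output. -/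
open MeasureTheory ProbabilityTheory Set
open scoped NNReal

/-!
Adding the minimality inequalities of `y₁` for `f α₁` and of `y₂` for `f α₂` gives
`(α₂ - α₁) * (g y₂ - g y₁) ≤ 0`, so it suffices that `g` is strictly decreasing.
Since `X - y ∼ 𝒩(m - y, v)`, `g y` is `E[Z ^ 2 | Z > 0]` for `Z ∼ 𝒩(m - y, v)`, and this is strictly
increasing in the mean: for `μ < μ'` the density ratio `φ_μ' / φ_μ` is strictly increasing, so
`∬ (s² - t²) (φ_μ' s φ_μ t - φ_μ s φ_μ' t) ds dt` over `(0, ∞)²` is positive, and expanding this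
integral is exactly the required comparison of the two conditional second moments.
-/

section Correlation

variable {α : Type*} [MeasurableSpace α] {ν : Measure α} {w p q : α → ℝ}

lemma integrable_prod_sub_mul_sub (hp : Integrable p ν) (hq : Integrable q ν)
    (hpw : Integrable (fun t => p t * w t) ν) (hqw : Integrable (fun t => q t * w t) ν) :
    Integrable (fun z : α × α => (w z.1 - w z.2) * (q z.1 * p z.2 - p z.1 * q z.2))
      (ν.prod ν) := by
  refine (((hqw.mul_prod hp).sub (hpw.mul_prod hq)).sub (hq.mul_prod hpw)).add
    (hp.mul_prod hqw) |>.congr (ae_of_all _ fun z => ?_)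
  simp only [Pi.add_apply, Pi.sub_apply]
  ring

lemma integral_prod_sub_mul_sub [SFinite ν] (hp : Integrable p ν) (hq : Integrable q ν)
    (hpw : Integrable (fun t => p t * w t) ν) (hqw : Integrable (fun t => q t * w t) ν) :
    ∫ z, (w z.1 - w z.2) * (q z.1 * p z.2 - p z.1 * q z.2) ∂(ν.prod ν)
      = 2 * ((∫ t, q t * w t ∂ν) * (∫ t, p t ∂ν) - (∫ t, p t * w t ∂ν) * ∫ t, q t ∂ν) := by
  have hsplit : (fun z : α × α => (w z.1 - w z.2) * (q z.1 * p z.2 - p z.1 * q z.2))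
      = fun z => ((q z.1 * w z.1) * p z.2 - (p z.1 * w z.1) * q z.2)
          - (q z.1 * (p z.2 * w z.2) - p z.1 * (q z.2 * w z.2)) := by
    funext z; ring
  rw [hsplit, integral_sub, integral_sub, integral_sub, integral_prod_mul (fun t => q t * w t) p,
    integral_prod_mul (fun t => p t * w t) q, integral_prod_mul q (fun t => p t * w t),
    integral_prod_mul p (fun t => q t * w t)]
  · ring
  exacts [hq.mul_prod hpw, hp.mul_prod hqw, hqw.mul_prod hp, hpw.mul_prod hq,
    (hqw.mul_prod hp).sub (hpw.mul_prod hq), (hq.mul_prod hpw).sub (hp.mul_prod hqw)]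

end Correlation

lemma sub_mul_sub_pos_of_strictMonoOn {s : Set ℝ} {w p q : ℝ → ℝ} (hw : StrictMonoOn w s)
    (hpq : ∀ t ∈ s, ∀ u ∈ s, t < u → p u * q t < q u * p t)
    {t u : ℝ} (ht : t ∈ s) (hu : u ∈ s) (htu : t ≠ u) :
    0 < (w t - w u) * (q t * p u - p t * q u) := by
  rcases htu.lt_or_gt with h | h
  · exact mul_pos_of_neg_of_neg (sub_neg.2 (hw ht hu h)) (by linarith [hpq t ht u hu h])
  · exact mul_pos (sub_pos.2 (hw hu ht h)) (by linarith [hpq u hu t ht h])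

lemma integral_mul_integral_lt_of_strictMonoOn {w p q : ℝ → ℝ} (hw : StrictMonoOn w (Ioi 0))
    (hpq : ∀ t ∈ Ioi (0 : ℝ), ∀ u ∈ Ioi (0 : ℝ), t < u → p u * q t < q u * p t)
    (hp : IntegrableOn p (Ioi 0)) (hq : IntegrableOn q (Ioi 0))
    (hpw : IntegrableOn (fun t => p t * w t) (Ioi 0))
    (hqw : IntegrableOn (fun t => q t * w t) (Ioi 0)) :
    (∫ t in Ioi 0, p t * w t) * (∫ t in Ioi 0, q t)
      < (∫ t in Ioi 0, q t * w t) * ∫ t in Ioi 0, p t := by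
  set ν := volume.restrict (Ioi (0 : ℝ))
  set F := fun z : ℝ × ℝ => (w z.1 - w z.2) * (q z.1 * p z.2 - p z.1 * q z.2)
  have hF : ∀ t ∈ Ioi (0 : ℝ), ∀ u ∈ Ioi (0 : ℝ), t ≠ u → 0 < F (t, u) :=
    fun t ht u hu => sub_mul_sub_pos_of_strictMonoOn hw hpq ht hu
  have hF_nonneg : 0 ≤ᵐ[ν.prod ν] F := by
    rw [Measure.prod_restrict]
    filter_upwards [ae_restrict_mem (measurableSet_Ioi.prod measurableSet_Ioi)] with z hz
    rcases eq_or_ne z.1 z.2 with h | h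
    · simp [F, h]
    · exact (hF z.1 hz.1 z.2 hz.2 h).le
  have hF_pos : 0 < ∫ z, F z ∂(ν.prod ν) := by
    rw [integral_pos_iff_support_of_nonneg_ae hF_nonneg (integrable_prod_sub_mul_sub hp hq hpw hqw)]
    have hsub : Ioo (0 : ℝ) 1 ×ˢ Ioo (1 : ℝ) 2 ⊆ Function.support F :=
      fun z hz => (hF z.1 hz.1.1 z.2 (zero_lt_one.trans hz.2.1)
        (hz.1.2.trans hz.2.1).ne).ne'
    refine lt_of_lt_of_le ?_ (measure_mono hsub)
    rw [Measure.prod_prod, Measure.restrict_apply measurableSet_Ioo,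
      Measure.restrict_apply measurableSet_Ioo,
      inter_eq_left.2 Ioo_subset_Ioi_self,
      inter_eq_left.2 (Ioo_subset_Ioi_self.trans (Ioi_subset_Ioi zero_le_one)),
      Real.volume_Ioo, Real.volume_Ioo]
    norm_num
  rw [integral_prod_sub_mul_sub hp hq hpw hqw] at hF_pos
  linarith

namespace ProbabilityTheory

variable {μ : ℝ} {v : ℝ≥0}

lemma gaussianPDFReal_mul_lt_mul (hv : v ≠ 0) {μ' t u : ℝ} (hμ : μ < μ') (htu : t < u) :
    gaussianPDFReal μ v u * gaussianPDFReal μ' v t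
      < gaussianPDFReal μ' v u * gaussianPDFReal μ v t := by
  have hv' : (0 : ℝ) < v := by positivity
  simp only [gaussianPDFReal]
  rw [mul_mul_mul_comm, mul_mul_mul_comm _ (Real.exp _), ← Real.exp_add, ← Real.exp_add]
  refine mul_lt_mul_of_pos_left (Real.exp_lt_exp.2 ?_) (by positivity)
  rw [← add_div, ← add_div, div_lt_div_iff_of_pos_right (by positivity)]
  nlinarith [mul_pos (sub_pos.2 hμ) (sub_pos.2 htu)]

lemma integrable_gaussianPDFReal_mul_sq (μ : ℝ) (v : ℝ≥0) :
    Integrable fun x => gaussianPDFReal μ v x * x ^ 2 := by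
  rcases eq_or_ne v 0 with rfl | hv
  · simp [gaussianPDFReal_zero_var]
  have h := (memLp_id_gaussianReal (μ := μ) (v := v) 2).integrable_sq
  rw [gaussianReal_of_var_ne_zero μ hv, integrable_withDensity_iff_integrable_smul'
    (measurable_gaussianPDF μ v) (ae_of_all _ fun _ => gaussianPDF_lt_top)] at h
  simpa using h

lemma setIntegral_gaussianReal_eq (hv : v ≠ 0) (f : ℝ → ℝ) (s : Set ℝ) :
    ∫ x in s, f x ∂gaussianReal μ v = ∫ x in s, gaussianPDFReal μ v x * f x := by
  rw [gaussianReal_of_var_ne_zero μ hv, setIntegral_withDensity_eq_setIntegral_toReal_smul₀' s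
    (measurable_gaussianPDF μ v).aemeasurable (ae_of_all _ fun _ => gaussianPDF_lt_top)]
  simp

lemma gaussianReal_real_eq_setIntegral (hv : v ≠ 0) (s : Set ℝ) :
    (gaussianReal μ v).real s = ∫ x in s, gaussianPDFReal μ v x := by
  rw [measureReal_def, gaussianReal_apply_eq_integral μ hv, ENNReal.toReal_ofReal
    (setIntegral_nonneg_of_ae (ae_of_all _ fun x => gaussianPDFReal_nonneg μ v x))]

lemma gaussianReal_real_pos (hv : v ≠ 0) {s : Set ℝ} (hs : volume s ≠ 0) :
    0 < (gaussianReal μ v).real s :=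
  ENNReal.toReal_pos (fun h => hs (gaussianReal_absolutelyContinuous' μ hv h))
    (measure_ne_top _ _)

/-- `E[Z ^ 2 | Z > 0]` for `Z ∼ 𝒩(μ, v)`. -/
noncomputable def gaussianTailSecondMoment (μ : ℝ) (v : ℝ≥0) : ℝ :=
  (∫ t in Ioi 0, t ^ 2 ∂gaussianReal μ v) / (gaussianReal μ v).real (Ioi 0)

theorem strictMono_gaussianTailSecondMoment (hv : v ≠ 0) :
    StrictMono (gaussianTailSecondMoment · v) := by
  intro μ μ' hμ
  have hden : ∀ μ : ℝ, 0 < ∫ t in Ioi 0, gaussianPDFReal μ v t := fun μ => by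
    rw [← gaussianReal_real_eq_setIntegral hv]
    exact gaussianReal_real_pos hv (by simp)
  simp only [gaussianTailSecondMoment, setIntegral_gaussianReal_eq hv,
    gaussianReal_real_eq_setIntegral hv]
  rw [div_lt_div_iff₀ (hden μ) (hden μ')]
  exact integral_mul_integral_lt_of_strictMonoOn
    ((pow_left_strictMonoOn₀ two_ne_zero).mono Ioi_subset_Ici_self)
    (fun t _ u _ htu => gaussianPDFReal_mul_lt_mul hv hμ htu)
    (integrable_gaussianPDFReal μ v).integrableOn (integrable_gaussianPDFReal μ' v).integrableOn
    (integrable_gaussianPDFReal_mul_sq μ v).integrableOn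
    (integrable_gaussianPDFReal_mul_sq μ' v).integrableOn

lemma HasLaw.condSecondMoment_sub_eq_gaussianTailSecondMoment {Ω : Type*} [MeasurableSpace Ω]
    {P : Measure Ω} {X : Ω → ℝ} (hX : HasLaw X (gaussianReal μ v) P) (y : ℝ) :
    (∫ ω in {ω | y < X ω}, (X ω - y) ^ 2 ∂P) / (P {ω | y < X ω}).toReal
      = gaussianTailSecondMoment (μ - y) v := by
  have hY := gaussianReal_sub_const hX y
  have hset : {ω | y < X ω} = (fun ω => X ω - y) ⁻¹' Ioi 0 := by ext; simp
  rw [hset, gaussianTailSecondMoment, ← hY.map_eq, measureReal_def,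
    setIntegral_map measurableSet_Ioi (by fun_prop) hY.aemeasurable,
    Measure.map_apply_of_aemeasurable hY.aemeasurable measurableSet_Ioi]

end ProbabilityTheory

lemma StrictAnti.le_of_forall_add_mul_le {h g : ℝ → ℝ} (hg : StrictAnti g) {α₁ α₂ y₁ y₂ : ℝ}
    (hα : α₁ < α₂) (hy₁ : ∀ y, h y₁ + α₁ * g y₁ ≤ h y + α₁ * g y)
    (hy₂ : ∀ y, h y₂ + α₂ * g y₂ ≤ h y + α₂ * g y) : y₁ ≤ y₂ := by
  by_contra! hy
  nlinarith [hy₁ y₂, hy₂ y₁, mul_pos (sub_pos.2 hα) (sub_pos.2 (hg hy))]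

theorem penalized_objective_minimizer_monotone_general {Ω : Type*} [MeasureSpace Ω]
    (P : Measure Ω)
    (X : Ω → ℝ) (hX : Measurable X) (m : ℝ) (v : ℝ≥0) (hv : 0 < v)
    (hlaw : Measure.map X P = gaussianReal m v)
    (g : ℝ → ℝ)
    (hg : ∀ y, g y =
      (∫ ω in {ω | y < X ω}, (X ω - y) ^ 2 ∂P) / (P {ω | y < X ω}).toReal)
    (f : ℝ → ℝ → ℝ)
    (hf : ∀ α y, f α y = (m - y) ^ 2 + v + α * g y)
    (α₁ α₂ : ℝ) (hα : α₁ < α₂)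
    (y₁ y₂ : ℝ)
    (hy₁ : ∀ y : ℝ, f α₁ y₁ ≤ f α₁ y)
    (hy₂ : ∀ y : ℝ, f α₂ y₂ ≤ f α₂ y) :
    y₁ ≤ y₂ := by
  have hXlaw : HasLaw X (gaussianReal m v) P := ⟨hX.aemeasurable, hlaw⟩
  have hg_anti : StrictAnti g := fun y y' hyy' => by
    rw [hg, hg, hXlaw.condSecondMoment_sub_eq_gaussianTailSecondMoment,
      hXlaw.condSecondMoment_sub_eq_gaussianTailSecondMoment]
    exact strictMono_gaussianTailSecondMoment hv.ne' (sub_lt_sub_left hyy' m)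
  refine hg_anti.le_of_forall_add_mul_le (h := fun y => (m - y) ^ 2 + v) hα
    (fun y => ?_) (fun y => ?_)
  · simpa only [hf] using hy₁ y
  · simpa only [hf] using hy₂ y

/-- Comparative statics in the penalty parameter: for a Gaussian random variable
`X` with mean `m` and variance `v > 0`, if `0 ≤ α₁ < α₂` and `y₁`, `y₂` are
global minimizers of `f_{α₁}` and `f_{α₂}` respectively, where
`f_α(y) = (m − y)² + v + α·g(y)` and `g(y) = E[(X − y)² | X > y]`,
then `y₁ ≤ y₂`. -/
theorem penalized_objective_minimizer_monotone {Ω : Type*} [MeasureSpace Ω]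
    (P : Measure Ω) [IsProbabilityMeasure P]
    (X : Ω → ℝ) (hX : Measurable X) (m : ℝ) (v : ℝ≥0) (hv : 0 < v)
    (hlaw : Measure.map X P = gaussianReal m v)
    (g : ℝ → ℝ)
    (hg : ∀ y, g y =
      (∫ ω in {ω | y < X ω}, (X ω - y) ^ 2 ∂P) / (P {ω | y < X ω}).toReal)
    (f : ℝ → ℝ → ℝ)
    (hf : ∀ α y, f α y = (m - y) ^ 2 + v + α * g y)
    (α₁ α₂ : ℝ) (hα₁ : 0 ≤ α₁) (hα : α₁ < α₂)
    (y₁ y₂ : ℝ)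
    (hy₁ : ∀ y : ℝ, f α₁ y₁ ≤ f α₁ y)
    (hy₂ : ∀ y : ℝ, f α₂ y₂ ≤ f α₂ y) :
    y₁ ≤ y₂ :=
  penalized_objective_minimizer_monotone_general P X hX m v hv hlaw g hg f hf α₁ α₂ hα y₁ y₂ hy₁ hy₂
end
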